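/- Let d ≥ 2 and f : [0,4] → (-∞,∞] be finite, non-increasing, and convex on (0,4], differentiable on (0,4) with concave derivative f' on (0,4), and lim_{t→0⁺} f(t) = f(0). Then for every (d+1)-point configuration ω ⊂ S^{d-1}, min_{x ∈ S^{d-1}} ∑_{v ∈ ω} f(|x - v|²) ≤ f(4) + d·f(2 - 2/d), with equality attained by the vertex set ω* of a regular d-simplex inscribed in S^{d-1}. Hence the (d+1)-point f-polarization of S^{d-1} equals f(4) + d·f(2 - 2/d). -/

import Mathlib

/-!
For any `d + 1` unit vectors `vᵢ` there is a unit `x` with `⟪x, vᵢ⟫ ≤ 1/d` for all `i` and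
`∑ ⟪x, vᵢ⟫ ≤ 0`: either some nonzero `w` has `⟪w, vᵢ⟫ ≤ 0` for all `i`, or `0 = ∑ μᵢ vᵢ` is a
convex combination, and then for the vertex `j` of least weight the vector `n` with
`⟪n, vᵢ⟫ = 1/d` for `i ≠ j` has `⟪n, vⱼ⟫ ≤ -1`, hence `‖n‖ ≥ 1`. The squared distances
`tᵢ = ‖x - vᵢ‖² = 2 - 2⟪x, vᵢ⟫` lie in `[p, 4]`, `p = 2 - 2/d`, with `∑ tᵢ ≥ d p + 4`, and the
chord of the convex non-increasing `f` over `[p, 4]` gives `∑ f tᵢ ≤ f 4 + d f p`.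

For the regular simplex and any unit `y`, the squared distances `tᵢ = ‖y - xᵢ‖²` have the same
first two moments about `p` as the multiset `{4, p, …, p}`. The quadratic `Q` tangent to `f` at
`p` and meeting it at `4` stays below `f` on `[0, 4]`, because `f - Q` has a double zero at `p`,
a zero at `4` and a concave derivative. Hence `∑ f tᵢ ≥ ∑ Q tᵢ = Q 4 + d Q p = f 4 + d f p`.
-/

open Set Finset Filter Topology Module
open scoped RealInnerProductSpace

theorem ConvexOn.le_add_slope_mul {s : Set ℝ} {g : ℝ → ℝ} (hg : ConvexOn ℝ s g) {a b t : ℝ}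
    (ha : a ∈ s) (hb : b ∈ s) (hab : a < b) (hat : a ≤ t) (htb : t ≤ b) :
    g t ≤ g a + slope g a b * (t - a) := by
  have hba : 0 < b - a := sub_pos.2 hab
  have key := hg.2 ha hb (div_nonneg (sub_nonneg.2 htb) hba.le)
    (div_nonneg (sub_nonneg.2 hat) hba.le) (by field_simp; ring)
  have ht : ((b - t) / (b - a)) • a + ((t - a) / (b - a)) • b = t := by
    simp only [smul_eq_mul]; field_simp; ring
  rw [ht, smul_eq_mul, smul_eq_mul] at key
  rw [slope_def_field]
  refine key.trans_eq ?_
  field_simp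
  ring

theorem ConvexOn.continuousWithinAt_right_of_antitoneOn {g : ℝ → ℝ} {l r : ℝ} (hlr : l < r)
    (hg : ConvexOn ℝ (Ioc l r) g) (hanti : AntitoneOn g (Ioc l r)) :
    ContinuousWithinAt g (Ioc l r) r := by
  obtain ⟨m, hlm, hmr⟩ := exists_between hlr
  have hm : m ∈ Ioc l r := ⟨hlm, hmr.le⟩
  have hr : r ∈ Ioc l r := right_mem_Ioc.2 hlr
  have hchord : Tendsto (fun t => g m + slope g m r * (t - m)) (𝓝[Ioc l r] r) (𝓝 (g r)) := by
    have hcont : Continuous fun t => g m + slope g m r * (t - m) := by fun_prop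
    convert (hcont.tendsto r).mono_left nhdsWithin_le_nhds using 2
    rw [mul_comm, ← smul_eq_mul, sub_smul_slope, vsub_eq_sub, add_sub_cancel]
  refine tendsto_of_tendsto_of_tendsto_of_le_of_le' tendsto_const_nhds hchord ?_ ?_
  · filter_upwards [self_mem_nhdsWithin] with t ht using hanti ht hr ht.2
  · filter_upwards [self_mem_nhdsWithin, nhdsWithin_le_nhds (Ioi_mem_nhds hmr)]
      with t ht htm using hg.le_add_slope_mul hm hr hmr (le_of_lt htm) ht.2

theorem sum_le_of_convexOn_of_le_sum {n : ℕ} {g : ℝ → ℝ} {p r : ℝ} (hpr : p < r)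
    (hg : ConvexOn ℝ (Icc p r) g) (hgr : g r ≤ g p) {t : Fin (n + 1) → ℝ}
    (ht : ∀ i, t i ∈ Icc p r) (hsum : n * p + r ≤ ∑ i, t i) :
    ∑ i, g (t i) ≤ g r + n * g p := by
  have hslope : slope g p r ≤ 0 := by
    rw [slope_def_field]; exact div_nonpos_of_nonpos_of_nonneg (by linarith) (by linarith)
  have hshift : slope g p r * (∑ i, t i - (n + 1) * p) ≤ slope g p r * (r - p) :=
    mul_le_mul_of_nonpos_left (by linarith) hslope
  calc ∑ i, g (t i) ≤ ∑ i, (g p + slope g p r * (t i - p)) := sum_le_sum fun i _ =>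
        hg.le_add_slope_mul (left_mem_Icc.2 hpr.le) (right_mem_Icc.2 hpr.le) hpr (ht i).1 (ht i).2
    _ = (n + 1) * g p + slope g p r * (∑ i, t i - (n + 1) * p) := by
        simp [sum_add_distrib, ← mul_sum, sum_sub_distrib]
    _ ≤ (n + 1) * g p + slope g p r * (r - p) := by linarith
    _ = g r + n * g p := by
        have h := sub_smul_slope g p r
        rw [smul_eq_mul, vsub_eq_sub] at h
        linear_combination h

theorem ConcaveOn.right_lt_of_lt_left {s : Set ℝ} {H : ℝ → ℝ} (hH : ConcaveOn ℝ s H) {x y z : ℝ}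
    (hx : x ∈ s) (hz : z ∈ s) (hxy : x < y) (hyz : y < z) (h : H y < H x) : H z < H y := by
  have hslope := hH.slope_anti_adjacent hx hz hxy hyz
  have hneg : (H y - H x) / (y - x) < 0 := div_neg_of_neg_of_pos (by linarith) (by linarith)
  have := (div_lt_iff₀ (sub_pos.2 hyz)).1 (hslope.trans_lt hneg)
  linarith

theorem nonneg_of_hasDerivAt_of_concaveOn {h H : ℝ → ℝ} {l a r : ℝ} (hla : l < a) (har : a < r)
    (hcont : ContinuousOn h (Ioc l r)) (hderiv : ∀ t ∈ Ioo l r, HasDerivAt h (H t) t)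
    (hH : ConcaveOn ℝ (Ioo l r) H) (ha : h a = 0) (hHa : H a = 0) (hr : h r = 0) :
    ∀ t ∈ Ioc l r, 0 ≤ h t := by
  have hmvt : ∀ {u w}, l < u → u < w → w ≤ r → ∃ c ∈ Ioo u w, h w - h u = H c * (w - u) := by
    intro u w hu huw hw
    obtain ⟨c, hc, hHc⟩ := exists_hasDerivAt_eq_slope h H huw
      (hcont.mono fun x hx => ⟨hu.trans_le hx.1, hx.2.trans hw⟩)
      fun x hx => hderiv x ⟨hu.trans hx.1, hx.2.trans_le hw⟩
    exact ⟨c, hc, by rw [hHc, div_mul_cancel₀ _ (sub_pos.2 huw).ne']⟩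
  intro t ht
  rcases lt_trichotomy t a with hta | rfl | hat
  · obtain ⟨c, hc, hhc⟩ := hmvt ht.1 hta har.le
    -- a positive value of `H` left of `a` would make `H` negative on `(a, r)`,
    -- against `h a = h r`
    have hHc : H c ≤ 0 := by
      by_contra! hHc
      obtain ⟨c', hc', hhc'⟩ := hmvt hla har le_rfl
      have hHc' := hH.right_lt_of_lt_left ⟨ht.1.trans hc.1, hc.2.trans har⟩
        ⟨hla.trans hc'.1, hc'.2⟩ hc.2 hc'.1 (by rwa [hHa])
      rw [hHa] at hHc'
      have := mul_neg_of_neg_of_pos hHc' (sub_pos.2 har)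
      linarith
    have := mul_nonpos_of_nonpos_of_nonneg hHc (sub_pos.2 hta).le
    linarith
  · exact ha.ge
  · obtain ⟨c, hc, hhc⟩ := hmvt hla hat ht.2
    rcases le_or_gt 0 (H c) with hHc | hHc
    · have := mul_nonneg hHc (sub_pos.2 hat).le
      linarith
    · rcases ht.2.lt_or_eq with htr | rfl
      · -- once `H` is negative right of `a`, concavity keeps it negative up to `r`
        obtain ⟨c', hc', hhc'⟩ := hmvt ht.1 htr le_rfl
        have hHc' := hH.right_lt_of_lt_left ⟨hla, har⟩ ⟨ht.1.trans hc'.1, hc'.2⟩ hc.1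
          (hc.2.trans hc'.1) (by rwa [hHa])
        have := mul_neg_of_neg_of_pos (hHc'.trans hHc) (sub_pos.2 htr)
        linarith
      · exact hr.ge

theorem quadratic_le_of_hasDerivAt_of_concaveOn {g g' : ℝ → ℝ} {l a r c : ℝ} (hla : l < a)
    (har : a < r) (hcont : ContinuousOn g (Ioc l r)) (hderiv : ∀ t ∈ Ioo l r, HasDerivAt g (g' t) t)
    (hg' : ConcaveOn ℝ (Ioo l r) g') (hc : g a + g' a * (r - a) + c * (r - a) ^ 2 = g r) :
    ∀ t ∈ Ioc l r, g a + g' a * (t - a) + c * (t - a) ^ 2 ≤ g t := by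
  set Q : ℝ → ℝ := fun t => g a + g' a * (t - a) + c * (t - a) ^ 2
  have hQ : ∀ t, HasDerivAt Q (g' a + 2 * c * (t - a)) t := fun t => by
    have h₁ := (hasDerivAt_id' t).sub_const a
    exact (((h₁.const_mul (g' a)).const_add (g a)).add ((h₁.pow 2).const_mul c)).congr_deriv
      (by norm_num; ring)
  have hlin : ConvexOn ℝ (Ioo l r) fun t => g' a + 2 * c * (t - a) :=
    ⟨convex_Ioo l r, fun x _ y _ μ ν _ _ hμν => le_of_eq <| by
      simp only [smul_eq_mul]; linear_combination (2 * c * a - g' a) * hμν⟩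
  intro t ht
  have := nonneg_of_hasDerivAt_of_concaveOn (h := g - Q) hla har
    (hcont.sub (continuous_iff_continuousAt.2 fun t => (hQ t).continuousAt).continuousOn)
    (fun t ht => (hderiv t ht).sub (hQ t)) (hg'.sub hlin) (by simp [Q]) (by simp) (by simp [Q, hc])
    t ht
  simpa [sub_nonneg] using this

theorem sum_quadratic_of_sum_eq {n : ℕ} {t : Fin (n + 1) → ℝ} {p r : ℝ}
    (h₁ : ∑ i, (t i - p) = r - p) (h₂ : ∑ i, (t i - p) ^ 2 = (r - p) ^ 2) (α β γ : ℝ) :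
    ∑ i, (α + β * (t i - p) + γ * (t i - p) ^ 2) = α + β * (r - p) + γ * (r - p) ^ 2 + n * α := by
  simp only [sum_add_distrib, ← mul_sum, h₁, h₂, sum_const, card_univ, Fintype.card_fin,
    nsmul_eq_mul]
  push_cast
  ring

theorem EReal.coe_finset_sum {ι : Type*} (s : Finset ι) (g : ι → ℝ) :
    ((∑ i ∈ s, g i : ℝ) : EReal) = ∑ i ∈ s, (g i : EReal) :=
  map_sum (⟨⟨(↑), EReal.coe_zero⟩, EReal.coe_add⟩ : ℝ →+ EReal) g s

theorem AntitoneOn.ereal_toReal {s : Set ℝ} {f : ℝ → EReal} (hf : AntitoneOn f s)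
    (hbot : ∀ t ∈ s, f t ≠ ⊥) (htop : ∀ t ∈ s, f t ≠ ⊤) : AntitoneOn (fun t => (f t).toReal) s :=
  fun _ ha _ hb hab => EReal.toReal_le_toReal (hf ha hb hab) (hbot _ hb) (htop _ ha)

section InnerProductSpace

variable {E : Type*} [NormedAddCommGroup E] [InnerProductSpace ℝ E]

theorem exists_norm_eq_one_inner_le_of_ne_zero {ι : Type*} [Fintype ι] {v : ι → E} {n : E}
    (hn : n ≠ 0) {c : ℝ} (hle : ∀ i, ⟪n, v i⟫ ≤ c * ‖n‖) (hsum : ∑ i, ⟪n, v i⟫ ≤ 0) :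
    ∃ x : E, ‖x‖ = 1 ∧ (∀ i, ⟪x, v i⟫ ≤ c) ∧ ∑ i, ⟪x, v i⟫ ≤ 0 := by
  have hpos : 0 < ‖n‖ := norm_pos_iff.2 hn
  refine ⟨‖n‖⁻¹ • n, norm_smul_inv_norm hn, fun i => ?_, ?_⟩
  · rw [real_inner_smul_left, inv_mul_le_iff₀ hpos, mul_comm]
    exact hle i
  · simp only [real_inner_smul_left, ← mul_sum]
    exact mul_nonpos_of_nonneg_of_nonpos (inv_nonneg.2 hpos.le) hsum

theorem exists_mem_stdSimplex_sum_smul_eq_zero [FiniteDimensional ℝ E] {ι : Type*} [Fintype ι]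
    [Nonempty ι] {v : ι → E} (hv : ∀ w, (∀ i, ⟪w, v i⟫ ≤ 0) → w = 0) :
    ∃ μ ∈ stdSimplex ℝ ι, ∑ i, μ i • v i = 0 := by
  classical
  set C := (fun μ : ι → ℝ => ∑ i, μ i • v i) '' stdSimplex ℝ ι
  by_contra h0
  have hC : Convex ℝ C := (convex_stdSimplex ℝ ι).is_linear_image
    (IsLinearMap.mk (fun _ _ => by simp [add_smul, sum_add_distrib])
      (fun _ _ => by simp [smul_sum, smul_smul]))
  have hCc : IsClosed C := ((isCompact_stdSimplex ℝ ι).image (by fun_prop)).isClosed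
  obtain ⟨φ, u, hφ, hu⟩ := geometric_hahn_banach_closed_point hC hCc
    (by simpa [C] using h0)
  set w := (InnerProductSpace.toDual ℝ E).symm φ
  have hw : ∀ i, ⟪w, v i⟫ < 0 := fun i => by
    rw [InnerProductSpace.toDual_symm_apply]
    refine (hφ _ ⟨Pi.single i 1, single_mem_stdSimplex ℝ i, ?_⟩).trans (by simpa using hu)
    simp [Pi.single_apply]
  obtain ⟨i⟩ := ‹Nonempty ι›
  simpa [hv w fun i => (hw i).le] using hw i

theorem linearIndependent_comp_succAbove [FiniteDimensional ℝ E] {d : ℕ} (hE : finrank ℝ E = d)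
    {v : Fin (d + 1) → E} (hv : ∀ w, (∀ i, ⟪w, v i⟫ ≤ 0) → w = 0) (j : Fin (d + 1)) :
    LinearIndependent ℝ (v ∘ j.succAbove) := by
  have hspan : Submodule.span ℝ (range (v ∘ j.succAbove)) = ⊤ := by
    rw [← Submodule.orthogonal_eq_bot_iff, Submodule.eq_bot_iff]
    intro w hw
    have hperp : ∀ i, i ≠ j → ⟪w, v i⟫ = 0 := fun i hij => by
      obtain ⟨k, rfl⟩ := Fin.exists_succAbove_eq hij
      exact Submodule.inner_left_of_mem_orthogonal (Submodule.subset_span (mem_range_self k)) hw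
    -- one of `w`, `-w` has non-positive inner product with every `v i`
    rcases le_total ⟪w, v j⟫ 0 with h | h
    · refine hv w fun i => ?_
      rcases eq_or_ne i j with rfl | hij
      exacts [h, (hperp i hij).le]
    · refine neg_eq_zero.1 (hv (-w) fun i => ?_)
      rcases eq_or_ne i j with rfl | hij
      · simpa using h
      · simp [hperp i hij]
  exact linearIndependent_of_top_le_span_of_card_eq_finrank hspan.ge (by simp [hE])

theorem LinearIndependent.exists_inner_eq [FiniteDimensional ℝ E] {ι : Type*} [Fintype ι]
    {b : ι → E} (hb : LinearIndependent ℝ b) (hcard : Fintype.card ι = finrank ℝ E) (c : ι → ℝ) :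
    ∃ n : E, ∀ k, ⟪n, b k⟫ = c k := by
  set B := basisOfLinearIndependentOfCardEqFinrank' b hb hcard
  refine ⟨(InnerProductSpace.toDual ℝ E).symm (LinearMap.toContinuousLinearMap (B.constr ℝ c)),
    fun k => ?_⟩
  rw [InnerProductSpace.toDual_symm_apply]
  simpa [B] using B.constr_basis ℝ c k

theorem exists_norm_eq_one_inner_le_of_eq_zero_of_inner_nonpos [FiniteDimensional ℝ E] {d : ℕ}
    (hE : finrank ℝ E = d) (hd : d ≠ 0) {v : Fin (d + 1) → E} (hv : ∀ i, ‖v i‖ = 1)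
    (hv' : ∀ w, (∀ i, ⟪w, v i⟫ ≤ 0) → w = 0) :
    ∃ x : E, ‖x‖ = 1 ∧ (∀ i, ⟪x, v i⟫ ≤ 1 / d) ∧ ∑ i, ⟪x, v i⟫ ≤ 0 := by
  obtain ⟨μ, ⟨hμ0, hμ1⟩, hμv⟩ := exists_mem_stdSimplex_sum_smul_eq_zero hv'
  obtain ⟨j, hj⟩ := Finite.exists_min μ
  obtain ⟨n, hn⟩ : ∃ n : E, ∀ k, ⟪n, v (j.succAbove k)⟫ = 1 / d :=
    (linearIndependent_comp_succAbove hE hv' j).exists_inner_eq (by simp [hE]) _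
  have hdpos : (0 : ℝ) < d := by positivity
  have hμj : (d + 1) * μ j ≤ 1 := by
    simpa [← hμ1] using card_nsmul_le_sum univ μ (μ j) fun i _ => hj i
  have hsplit : μ j * ⟪n, v j⟫ + (1 - μ j) / d = 0 := by
    have h := congrArg (⟪n, ·⟫) hμv
    rw [Fin.sum_univ_succAbove _ j] at h hμ1
    simp only [inner_add_right, inner_sum, real_inner_smul_right, hn, ← sum_mul,
      inner_zero_right] at h
    rw [← h, show ∑ k, μ (j.succAbove k) = 1 - μ j by linarith]
    ring
  have hμpos : 0 < μ j := (hμ0 j).lt_of_ne fun h => by simp [← h, hd] at hsplit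
  have hnj : ⟪n, v j⟫ ≤ -1 := by
    field_simp at hsplit
    nlinarith [mul_pos hdpos hμpos]
  have hnorm : 1 ≤ ‖n‖ := by
    have := abs_real_inner_le_norm n (v j)
    rw [hv j, mul_one] at this
    linarith [neg_abs_le ⟪n, v j⟫]
  refine exists_norm_eq_one_inner_le_of_ne_zero (norm_pos_iff.1 (by linarith)) (c := 1 / d)
    (fun i => ?_) ?_
  · rcases eq_or_ne i j with rfl | hij
    · have : 0 ≤ 1 / (d : ℝ) * ‖n‖ := by positivity
      linarith
    · obtain ⟨k, rfl⟩ := Fin.exists_succAbove_eq hij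
      rw [hn k]
      exact le_mul_of_one_le_right (by positivity) hnorm
  · rw [Fin.sum_univ_succAbove _ j]
    simp only [hn, sum_const, card_univ, Fintype.card_fin, nsmul_eq_mul]
    field_simp
    linarith

theorem exists_norm_eq_one_inner_le [FiniteDimensional ℝ E] {d : ℕ} (hE : finrank ℝ E = d)
    (hd : d ≠ 0) {v : Fin (d + 1) → E} (hv : ∀ i, ‖v i‖ = 1) :
    ∃ x : E, ‖x‖ = 1 ∧ (∀ i, ⟪x, v i⟫ ≤ 1 / d) ∧ ∑ i, ⟪x, v i⟫ ≤ 0 := by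
  by_cases hv' : ∀ w, (∀ i, ⟪w, v i⟫ ≤ 0) → w = 0
  · exact exists_norm_eq_one_inner_le_of_eq_zero_of_inner_nonpos hE hd hv hv'
  · push Not at hv'
    obtain ⟨w, hw, hw0⟩ := hv'
    exact exists_norm_eq_one_inner_le_of_ne_zero hw0
      (fun i => (hw i).trans (by positivity)) (sum_nonpos fun i _ => hw i)

def IsRegularSimplex {d : ℕ} (x : Fin (d + 1) → E) : Prop :=
  (∀ i, ‖x i‖ = 1) ∧ ∀ i j, i ≠ j → ⟪x i, x j⟫ = -1 / d

namespace IsRegularSimplex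

variable {d : ℕ} {x : Fin (d + 1) → E}

theorem inner_eq (hx : IsRegularSimplex x) (i j : Fin (d + 1)) :
    ⟪x i, x j⟫ = (if i = j then 1 + 1 / (d : ℝ) else 0) - 1 / d := by
  split_ifs with h
  · subst h; rw [real_inner_self_eq_norm_sq, hx.1]; ring
  · rw [hx.2 i j h]; ring

theorem sum_eq_zero (hx : IsRegularSimplex x) (hd : d ≠ 0) : ∑ i, x i = 0 := by
  have hrow : ∀ i, ⟪x i, ∑ j, x j⟫ = 0 := fun i => by
    simp only [inner_sum, hx.inner_eq, sum_sub_distrib, sum_ite_eq, Finset.mem_univ, if_true,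
      sum_const, card_univ, Fintype.card_fin, nsmul_eq_mul]
    field_simp
    push_cast
    ring
  rw [← inner_self_eq_zero (𝕜 := ℝ), sum_inner]
  simp [hrow]

theorem linearIndependent_succ (hx : IsRegularSimplex x) (hd : d ≠ 0) :
    LinearIndependent ℝ (x ∘ Fin.succ) := by
  rw [Fintype.linearIndependent_iff]
  intro g hg
  have hrel : ∀ i, ∑ k, g k * ⟪x i, x k.succ⟫ = 0 := fun i => by
    simpa [inner_sum, real_inner_smul_right] using congrArg (⟪x i, ·⟫) hg
  -- pairing with `x 0` kills the diagonal term, so the coefficients sum to zero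
  have hsum : ∑ k, g k = 0 := by
    have := hrel 0
    simp only [hx.2 0 _ (Fin.succ_ne_zero _).symm, ← sum_mul] at this
    simpa [hd] using this
  intro m
  have := hrel m.succ
  simp only [hx.inner_eq, Fin.succ_inj, mul_sub, sum_sub_distrib, mul_ite, mul_zero, sum_ite_eq,
    Finset.mem_univ, if_true, ← sum_mul, hsum, zero_mul, sub_zero] at this
  exact (mul_eq_zero.1 this).resolve_right (by positivity)

variable [FiniteDimensional ℝ E]

theorem sum_inner_smul (hx : IsRegularSimplex x) (hE : finrank ℝ E = d) (hd : d ≠ 0) (y : E) :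
    ∑ i, ⟪x i, y⟫ • x i = (1 + 1 / d : ℝ) • y := by
  have hspan := (hx.linearIndependent_succ hd).span_eq_top_of_card_eq_finrank' (by simp [hE])
  have hT := LinearMap.ext_on_range hspan (f := ∑ i, (innerₛₗ ℝ (x i)).smulRight (x i))
    (g := (1 + 1 / d : ℝ) • LinearMap.id) fun k => by
      simp only [Function.comp_apply, LinearMap.coe_sum, LinearMap.coe_smulRight,
        innerₛₗ_apply_apply, Finset.sum_apply, hx.inner_eq, sub_smul, ite_smul, zero_smul,
        sum_sub_distrib, sum_ite_eq', Finset.mem_univ, if_true, ← smul_sum, hx.sum_eq_zero hd,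
        smul_zero, sub_zero, LinearMap.smul_apply, LinearMap.id_coe, id_eq]
  simpa using LinearMap.congr_fun hT y

theorem sum_inner_sq (hx : IsRegularSimplex x) (hE : finrank ℝ E = d) (hd : d ≠ 0) (y : E) :
    ∑ i, ⟪y, x i⟫ ^ 2 = (1 + 1 / d) * ‖y‖ ^ 2 := by
  have h := congrArg (⟪y, ·⟫) (hx.sum_inner_smul hE hd y)
  simp only [inner_sum, real_inner_smul_right, real_inner_self_eq_norm_sq] at h
  rw [← h]
  refine sum_congr rfl fun i _ => ?_
  rw [real_inner_comm (x i) y]; ring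

theorem sum_norm_sub_sq (hx : IsRegularSimplex x) (hE : finrank ℝ E = d) (hd : d ≠ 0) {y : E}
    (hy : ‖y‖ = 1) :
    ∑ i, (‖y - x i‖ ^ 2 - (2 - 2 / d)) = 4 - (2 - 2 / (d : ℝ)) ∧
      ∑ i, (‖y - x i‖ ^ 2 - (2 - 2 / d)) ^ 2 = (4 - (2 - 2 / (d : ℝ))) ^ 2 := by
  have ht : ∀ i, ‖y - x i‖ ^ 2 - (2 - 2 / d) = 2 / (d : ℝ) - 2 * ⟪y, x i⟫ := fun i => by
    rw [norm_sub_sq_real, hy, hx.1]; ring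
  have h₁ : ∑ i, ⟪y, x i⟫ = 0 := by rw [← inner_sum, hx.sum_eq_zero hd, inner_zero_right]
  have h₂ := hx.sum_inner_sq hE hd y
  rw [hy] at h₂
  simp only [ht, sub_sq, sum_add_distrib, sum_sub_distrib, ← mul_sum, mul_pow, h₁, h₂, sum_const,
    card_univ, Fintype.card_fin, nsmul_eq_mul]
  constructor <;> field_simp <;> push_cast <;> ring

end IsRegularSimplex

theorem two_sub_two_div_mem_Ioo {d : ℕ} (hd : 2 ≤ d) : 2 - 2 / (d : ℝ) ∈ Ioo (0 : ℝ) 4 := by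
  have h₁ : 2 / (d : ℝ) ≤ 1 := by rw [div_le_one (by positivity)]; exact_mod_cast hd
  have h₂ : 0 < 2 / (d : ℝ) := by positivity
  constructor <;> linarith

theorem sum_le_of_inner_le {d : ℕ} (hd : 2 ≤ d) {f : ℝ → EReal}
    (hne_bot : ∀ t ∈ Icc (0 : ℝ) 4, f t ≠ ⊥) (hfin : ∀ t ∈ Ioc (0 : ℝ) 4, f t ≠ ⊤)
    (hanti : AntitoneOn f (Ioc 0 4)) (hconv : ConvexOn ℝ (Ioc 0 4) fun t => (f t).toReal)
    {v : Fin (d + 1) → E} (hv : ∀ i, ‖v i‖ = 1) {y : E} (hy : ‖y‖ = 1)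
    (hle : ∀ i, ⟪y, v i⟫ ≤ 1 / d) (hsum : ∑ i, ⟪y, v i⟫ ≤ 0) :
    ∑ i, f (‖y - v i‖ ^ 2) ≤ f 4 + ((d : ℝ) : EReal) * f (2 - 2 / d) := by
  set p : ℝ := 2 - 2 / d
  obtain ⟨hp0, hp4⟩ : p ∈ Ioo (0 : ℝ) 4 := two_sub_two_div_mem_Ioo hd
  have hp : p ∈ Ioc (0 : ℝ) 4 := ⟨hp0, hp4.le⟩
  have h4 : (4 : ℝ) ∈ Ioc (0 : ℝ) 4 := by norm_num
  have hcoe : ∀ t ∈ Ioc (0 : ℝ) 4, f t = ((f t).toReal : EReal) := fun t ht =>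
    (EReal.coe_toReal (hfin t ht) (hne_bot t (Ioc_subset_Icc_self ht))).symm
  have hdist : ∀ i, ‖y - v i‖ ^ 2 = 2 - 2 * ⟪y, v i⟫ := fun i => by
    rw [norm_sub_sq_real, hy, hv]; ring
  have ht : ∀ i, ‖y - v i‖ ^ 2 ∈ Icc p 4 := fun i => by
    have := neg_le_of_abs_le ((abs_real_inner_le_norm y (v i)).trans_eq (by rw [hy, hv, one_mul]))
    have := hle i
    rw [hdist]
    constructor
    · have : 2 / (d : ℝ) = 2 * (1 / d) := by ring
      linarith
    · linarith
  have hdp : (d : ℝ) * p + 4 ≤ ∑ i, ‖y - v i‖ ^ 2 := by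
    simp only [hdist, sum_sub_distrib, ← mul_sum, sum_const, card_univ, Fintype.card_fin,
      nsmul_eq_mul, p]
    have : (d : ℝ) * (2 - 2 / d) = 2 * d - 2 := by field_simp
    push_cast
    linarith
  have hreal := sum_le_of_convexOn_of_le_sum hp4 (hconv.subset (Icc_subset_Ioc hp0 le_rfl)
    (convex_Icc _ _)) ((hanti.ereal_toReal (fun t ht => hne_bot t (Ioc_subset_Icc_self ht)) hfin)
      hp h4 hp4.le) ht hdp
  calc ∑ i, f (‖y - v i‖ ^ 2) = ((∑ i, (f (‖y - v i‖ ^ 2)).toReal : ℝ) : EReal) := by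
        rw [EReal.coe_finset_sum]
        exact sum_congr rfl fun i _ => hcoe _ (Icc_subset_Ioc hp0 le_rfl (ht i))
    _ ≤ (((f 4).toReal + d * (f p).toReal : ℝ) : EReal) := EReal.coe_le_coe_iff.2 hreal
    _ = f 4 + ((d : ℝ) : EReal) * f p := by
        rw [EReal.coe_add, EReal.coe_mul, ← hcoe 4 h4, ← hcoe p hp]

theorem le_sum_of_isRegularSimplex [FiniteDimensional ℝ E] {d : ℕ} (hE : finrank ℝ E = d)
    (hd : 2 ≤ d) {f : ℝ → EReal} {f' : ℝ → ℝ}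
    (hne_bot : ∀ t ∈ Icc (0 : ℝ) 4, f t ≠ ⊥) (hfin : ∀ t ∈ Ioc (0 : ℝ) 4, f t ≠ ⊤)
    (hanti : AntitoneOn f (Ioc 0 4)) (hconv : ConvexOn ℝ (Ioc 0 4) fun t => (f t).toReal)
    (hderiv : ∀ t ∈ Ioo (0 : ℝ) 4, HasDerivAt (fun s => (f s).toReal) (f' t) t)
    (hconc : ConcaveOn ℝ (Ioo 0 4) f') (hlim : Tendsto f (𝓝[>] 0) (𝓝 (f 0)))
    {x : Fin (d + 1) → E} (hx : IsRegularSimplex x) {y : E} (hy : ‖y‖ = 1) :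
    f 4 + ((d : ℝ) : EReal) * f (2 - 2 / d) ≤ ∑ i, f (‖y - x i‖ ^ 2) := by
  set F : ℝ → ℝ := fun t => (f t).toReal
  set p : ℝ := 2 - 2 / d
  obtain ⟨hp0, hp4⟩ : p ∈ Ioo (0 : ℝ) 4 := two_sub_two_div_mem_Ioo hd
  have hcoe : ∀ t ∈ Ioc (0 : ℝ) 4, f t = (F t : EReal) := fun t ht =>
    (EReal.coe_toReal (hfin t ht) (hne_bot t (Ioc_subset_Icc_self ht))).symm
  have hcont : ContinuousOn F (Ioc 0 4) := by
    intro t ht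
    rcases ht.2.lt_or_eq with ht4 | rfl
    · exact (hderiv t ⟨ht.1, ht4⟩).continuousAt.continuousWithinAt
    · exact hconv.continuousWithinAt_right_of_antitoneOn (by norm_num)
        (hanti.ereal_toReal (fun t ht => hne_bot t (Ioc_subset_Icc_self ht)) hfin)
  set c := (F 4 - F p - f' p * (4 - p)) / (4 - p) ^ 2
  set Q : ℝ → ℝ := fun t => F p + f' p * (t - p) + c * (t - p) ^ 2
  have hQ4 : Q 4 = F 4 := by
    simp only [Q, c]; rw [div_mul_cancel₀ _ (pow_pos (sub_pos.2 hp4) 2).ne']; ring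
  have hQF : ∀ t ∈ Ioc (0 : ℝ) 4, Q t ≤ F t :=
    quadratic_le_of_hasDerivAt_of_concaveOn hp0 hp4 hcont hderiv hconc hQ4
  have hQf : ∀ t ∈ Icc (0 : ℝ) 4, (Q t : EReal) ≤ f t := by
    intro t ht
    rcases ht.1.lt_or_eq with ht0 | rfl
    · rw [hcoe t ⟨ht0, ht.2⟩]; exact EReal.coe_le_coe_iff.2 (hQF t ⟨ht0, ht.2⟩)
    · -- `f` is only right-continuous at `0`, so the bound passes to the limit
      refine le_of_tendsto_of_tendsto (f := fun t => (Q t : EReal)) ?_ hlim ?_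
      · exact (continuous_coe_real_ereal.comp (by fun_prop : Continuous Q)).tendsto _ |>.mono_left
          nhdsWithin_le_nhds
      · filter_upwards [Ioo_mem_nhdsGT (by norm_num : (0 : ℝ) < 4)] with s hs
        rw [hcoe s (Ioo_subset_Ioc_self hs)]
        exact EReal.coe_le_coe_iff.2 (hQF s (Ioo_subset_Ioc_self hs))
  obtain ⟨h₁, h₂⟩ := hx.sum_norm_sub_sq hE (by omega) hy
  have hsumQ := sum_quadratic_of_sum_eq h₁ h₂ (F p) (f' p) c
  have hdist : ∀ i, ‖y - x i‖ ^ 2 ∈ Icc (0 : ℝ) 4 := fun i => by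
    have := (norm_sub_le y (x i)).trans_eq (by rw [hy, hx.1]; norm_num : ‖y‖ + ‖x i‖ = 2)
    exact ⟨by positivity, by nlinarith [norm_nonneg (y - x i)]⟩
  calc f 4 + ((d : ℝ) : EReal) * f p = ((F 4 + d * F p : ℝ) : EReal) := by
        rw [EReal.coe_add, EReal.coe_mul, ← hcoe 4 (by norm_num), ← hcoe p ⟨hp0, hp4.le⟩]
    _ = ∑ i, (Q (‖y - x i‖ ^ 2) : EReal) := by
        rw [← EReal.coe_finset_sum, ← hQ4]; congr 1; exact hsumQ.symm
    _ ≤ ∑ i, f (‖y - x i‖ ^ 2) := sum_le_sum fun i _ => hQf _ (hdist i)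

end InnerProductSpace

theorem stmt_17 (d : ℕ) (hd : 2 ≤ d) (f : ℝ → EReal) (f' : ℝ → ℝ)
    (hne_bot : ∀ t ∈ Set.Icc (0:ℝ) 4, f t ≠ ⊥)
    (hfin : ∀ t ∈ Set.Ioc (0:ℝ) 4, f t ≠ ⊤)
    (hanti : AntitoneOn f (Set.Ioc (0:ℝ) 4))
    (hconv : ConvexOn ℝ (Set.Ioc (0:ℝ) 4) (fun t => (f t).toReal))
    (hderiv : ∀ t ∈ Set.Ioo (0:ℝ) 4, HasDerivAt (fun s => (f s).toReal) (f' t) t)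
    (hconc : ConcaveOn ℝ (Set.Ioo (0:ℝ) 4) f')
    (hlim : Filter.Tendsto f (nhdsWithin 0 (Set.Ioi 0)) (nhds (f 0))) :
    (∀ v : Fin (d+1) → EuclideanSpace ℝ (Fin d), (∀ i, ‖v i‖ = 1) →
      Function.Injective v →
      (⨅ y : Metric.sphere (0 : EuclideanSpace ℝ (Fin d)) 1,
          ∑ i, f (‖(y : EuclideanSpace ℝ (Fin d)) - v i‖^2)) ≤
        f 4 + ((d:ℝ) : EReal) * f (2 - 2/(d:ℝ))) ∧
    (∀ x : Fin (d+1) → EuclideanSpace ℝ (Fin d), (∀ i, ‖x i‖ = 1) →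
      (∀ i j, i ≠ j → (inner ℝ (x i) (x j) : ℝ) = -1/(d:ℝ)) →
      (⨅ y : Metric.sphere (0 : EuclideanSpace ℝ (Fin d)) 1,
          ∑ i, f (‖(y : EuclideanSpace ℝ (Fin d)) - x i‖^2)) =
        f 4 + ((d:ℝ) : EReal) * f (2 - 2/(d:ℝ))) := by
  have hE := finrank_euclideanSpace_fin (𝕜 := ℝ) (n := d)
  have upper : ∀ v : Fin (d + 1) → EuclideanSpace ℝ (Fin d), (∀ i, ‖v i‖ = 1) →
      (⨅ y : Metric.sphere (0 : EuclideanSpace ℝ (Fin d)) 1,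
          ∑ i, f (‖(y : EuclideanSpace ℝ (Fin d)) - v i‖ ^ 2)) ≤
        f 4 + ((d : ℝ) : EReal) * f (2 - 2 / (d : ℝ)) := fun v hv => by
    obtain ⟨y, hy, hle, hsum⟩ := exists_norm_eq_one_inner_le hE (by omega) hv
    exact iInf_le_of_le ⟨y, mem_sphere_zero_iff_norm.2 hy⟩
      (sum_le_of_inner_le hd hne_bot hfin hanti hconv hv hy hle hsum)
  refine ⟨fun v hv _ => upper v hv, fun x hx hxx => (upper x hx).antisymm (le_iInf fun y => ?_)⟩
  exact le_sum_of_isRegularSimplex hE hd hne_bot hfin hanti hconv hderiv hconc hlim ⟨hx, hxx⟩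
    (mem_sphere_zero_iff_norm.1 y.2)
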